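/- For X ∈ ℝ^{N×N} symmetric with eigendecomposition X = VΞV' and α > 0, the matrix P_α(X) := (1/2)V(Ξ + (Ξ² + 4αI)^{1/2})V' is positive definite and is the unique minimizer over positive semidefinite matrices B of (1/2)‖B − X‖_F² − α·log det(B). -/

import Mathlib

/-!
Writing `p = (ξ + √(ξ² + 4α)) / 2` for the eigenvalues of `P`, one has `p - ξ = α / p`, so
`P - X = α P⁻¹`. Expanding the square around `P`, the objective `f` satisfies, for positive definite `B`,
`f B - f P = ½‖B - P‖² + α (tr (P⁻¹ (B - P)) - (log det B - log det P))`,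
and the bracket is nonnegative by concavity of `log det`: factoring `P⁻¹ = Rᴴ R`, it is
`tr M - N - log det M` for `M = R B Rᴴ`, i.e. a sum of `λ - 1 - log λ ≥ 0` over the eigenvalues
of `M`. Hence the gap is at least `½‖B - P‖² > 0`.
-/

open Matrix

/-- The proximal point of `t ↦ -a log t` at `x`: the positive root of `t² - x t - a`. -/
noncomputable def logBarrierProx (a x : ℝ) : ℝ := (x + √(x ^ 2 + 4 * a)) / 2

theorem logBarrierProx_pos {a : ℝ} (ha : 0 < a) (x : ℝ) : 0 < logBarrierProx a x := by
  have hroot : |x| < √(x ^ 2 + 4 * a) := by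
    rw [← Real.sqrt_sq_eq_abs]
    exact Real.sqrt_lt_sqrt (sq_nonneg x) (by linarith)
  unfold logBarrierProx
  linarith [neg_abs_le x]

theorem logBarrierProx_sub_self {a : ℝ} (ha : 0 < a) (x : ℝ) :
    logBarrierProx a x - x = a / logBarrierProx a x := by
  have hsq : √(x ^ 2 + 4 * a) ^ 2 = x ^ 2 + 4 * a := Real.sq_sqrt (by positivity)
  rw [eq_div_iff (logBarrierProx_pos ha x).ne', logBarrierProx]
  linear_combination hsq / 4

namespace Matrix

section FrobeniusExpansion

variable {m n : Type*} [Fintype m] [Fintype n]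

theorem sum_sum_sq_sub_eq {R : Type*} [CommRing R] (B P X : Matrix m n R) :
    ∑ i, ∑ j, (B i j - X i j) ^ 2 = ∑ i, ∑ j, (P i j - X i j) ^ 2 +
      ∑ i, ∑ j, (B i j - P i j) ^ 2 + 2 * ((B - P) * (P - X)ᵀ).trace := by
  simp only [trace, diag_apply, mul_apply, transpose_apply, Matrix.sub_apply, Finset.mul_sum,
    ← Finset.sum_add_distrib]
  exact Fintype.sum_congr _ _ fun i => Fintype.sum_congr _ _ fun j => by ring

theorem sum_sum_sq_pos_of_ne_zero {A : Matrix m n ℝ} (hA : A ≠ 0) :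
    0 < ∑ i, ∑ j, A i j ^ 2 := by
  obtain ⟨i, j, hij⟩ : ∃ i j, A i j ≠ 0 := by
    by_contra! h
    exact hA (Matrix.ext h)
  exact Finset.sum_pos' (fun _ _ => Finset.sum_nonneg fun _ _ => sq_nonneg _)
    ⟨i, Finset.mem_univ i, Finset.sum_pos' (fun _ _ => sq_nonneg _)
      ⟨j, Finset.mem_univ j, by positivity⟩⟩

end FrobeniusExpansion

variable {n : Type*} [Fintype n] [DecidableEq n]

section OrthogonalConjugation

variable {V : Matrix n n ℝ}

theorem conj_diagonal_mul_conj_diagonal (hV : Vᵀ * V = 1) (d e : n → ℝ) :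
    V * diagonal d * Vᵀ * (V * diagonal e * Vᵀ) = V * diagonal (d * e) * Vᵀ := by
  simp only [Matrix.mul_assoc]
  rw [← Matrix.mul_assoc Vᵀ V, hV, Matrix.one_mul, ← Matrix.mul_assoc (diagonal d),
    diagonal_mul_diagonal]
  rfl

theorem inv_conj_diagonal (hV : Vᵀ * V = 1) {d : n → ℝ} (hd : ∀ i, d i ≠ 0) :
    (V * diagonal d * Vᵀ)⁻¹ = V * diagonal d⁻¹ * Vᵀ := by
  refine inv_eq_right_inv ?_
  have hdd : d * d⁻¹ = 1 := funext fun i => mul_inv_cancel₀ (hd i)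
  rw [conj_diagonal_mul_conj_diagonal hV, hdd, diagonal_one', Matrix.mul_one,
    mul_eq_one_comm.mp hV]

theorem posDef_conj_diagonal (hV : Vᵀ * V = 1) {d : n → ℝ} (hd : ∀ i, 0 < d i) :
    (V * diagonal d * Vᵀ).PosDef := by
  have hVunit : IsUnit V := (isUnit_iff_isUnit_det V).mpr (isUnit_det_of_left_inverse hV)
  simpa [star_eq_conjTranspose, conjTranspose_eq_transpose_of_trivial] using
    (IsUnit.posDef_star_right_conjugate_iff hVunit).mpr (PosDef.diagonal hd)

end OrthogonalConjugation

theorem PosDef.log_det_le_trace_sub_card {M : Matrix n n ℝ} (hM : M.PosDef) :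
    Real.log M.det ≤ M.trace - Fintype.card n := by
  have hev := hM.eigenvalues_pos
  rw [hM.isHermitian.det_eq_prod_eigenvalues, hM.isHermitian.trace_eq_sum_eigenvalues]
  simp only [RCLike.ofReal_real_eq_id, id]
  rw [Real.log_prod fun i _ => (hev i).ne', ← Finset.card_univ, Finset.card_eq_sum_ones,
    Nat.cast_sum, Nat.cast_one, ← Finset.sum_sub_distrib]
  exact Finset.sum_le_sum fun i _ => Real.log_le_sub_one_of_pos (hev i)

open scoped MatrixOrder in
theorem PosDef.log_det_le_log_det_add_trace_inv_mul {P B : Matrix n n ℝ} (hP : P.PosDef)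
    (hB : B.PosDef) : Real.log B.det ≤ Real.log P.det + (P⁻¹ * (B - P)).trace := by
  obtain ⟨R, hR⟩ := CStarAlgebra.nonneg_iff_eq_star_mul_self.mp hP.inv.posSemidef.nonneg
  rw [star_eq_conjTranspose] at hR
  have hdet : (R * B * Rᴴ).det = P⁻¹.det * B.det := by
    rw [hR, det_mul, det_mul, det_mul]
    ring
  have hM : (R * B * Rᴴ).PosDef := by
    refine (hB.posSemidef.mul_mul_conjTranspose_same R).posDef_iff_det_ne_zero.mpr ?_
    rw [hdet]
    exact mul_ne_zero hP.inv.det_pos.ne' hB.det_pos.ne'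
  have htr : (P⁻¹ * (B - P)).trace = (R * B * Rᴴ).trace - Fintype.card n := by
    rw [mul_sub, nonsing_inv_mul P hP.det_pos.ne'.isUnit, trace_sub, trace_one, hR,
      trace_mul_cycle R]
  have hlog := hM.log_det_le_trace_sub_card
  rw [hdet, Real.log_mul hP.inv.det_pos.ne' hB.det_pos.ne', det_nonsing_inv,
    Ring.inverse_eq_inv', Real.log_inv] at hlog
  linarith

end Matrix

theorem logdet_prox_matrix {N : ℕ} (X : Matrix (Fin N) (Fin N) ℝ)
    (V : Matrix (Fin N) (Fin N) ℝ) (ξ : Fin N → ℝ) (α : ℝ) (hα : 0 < α)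
    (hV : Vᵀ * V = 1) (hX : X = V * Matrix.diagonal ξ * Vᵀ)
    (P : Matrix (Fin N) (Fin N) ℝ)
    (hP : P = (1 / 2 : ℝ) •
      (V * Matrix.diagonal (fun i => ξ i + Real.sqrt ((ξ i) ^ 2 + 4 * α)) * Vᵀ)) :
    P.PosDef ∧
      ∀ B : Matrix (Fin N) (Fin N) ℝ, B.PosSemidef → B.det ≠ 0 → B ≠ P →
        (1 / 2) * (∑ i, ∑ j, (P i j - X i j) ^ 2) - α * Real.log P.det <
          (1 / 2) * (∑ i, ∑ j, (B i j - X i j) ^ 2) - α * Real.log B.det := by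
  set p : Fin N → ℝ := fun i => logBarrierProx α (ξ i)
  have hp_pos : ∀ i, 0 < p i := fun i => logBarrierProx_pos hα (ξ i)
  have hP_conj : P = V * diagonal p * Vᵀ := by
    rw [hP, ← Matrix.smul_mul, ← Matrix.mul_smul, ← diagonal_smul]
    congr 3
    funext i
    simp only [p, logBarrierProx, Pi.smul_apply, smul_eq_mul]
    ring
  have hPX : P - X = α • P⁻¹ := by
    have hgap : (fun i => p i - ξ i) = α • p⁻¹ :=
      funext fun i => logBarrierProx_sub_self hα (ξ i)
    rw [hP_conj, hX, inv_conj_diagonal hV fun i => (hp_pos i).ne', ← sub_mul, ← mul_sub,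
      diagonal_sub, hgap, diagonal_smul, Matrix.mul_smul, Matrix.smul_mul]
  have hPdef : P.PosDef := hP_conj ▸ posDef_conj_diagonal hV hp_pos
  refine ⟨hPdef, fun B hB hBdet hBP => ?_⟩
  have hconcave := mul_le_mul_of_nonneg_left
    (hPdef.log_det_le_log_det_add_trace_inv_mul (hB.posDef_iff_det_ne_zero.mpr hBdet)) hα.le
  have hcross : ((B - P) * (P - X)ᵀ).trace = α * (P⁻¹ * (B - P)).trace := by
    rw [hPX, transpose_smul, ← conjTranspose_eq_transpose_of_trivial, hPdef.inv.isHermitian.eq,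
      Matrix.mul_smul, trace_smul, trace_mul_comm, smul_eq_mul]
  have hdist := sum_sum_sq_pos_of_ne_zero (sub_ne_zero.mpr hBP)
  simp only [Matrix.sub_apply] at hdist
  rw [sum_sum_sq_sub_eq B P X, hcross]
  linarith
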